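/- arXiv:1904.09247 — 4 statements merged into one kernel-verified Lean document; each statement's English description precedes it below -/
import Mathlib

section
/- (Brüstle–Dupont–Pérotin.) The quiver Q_{2,2,2}, given by the skew-symmetric matrix B = [[0, 2, −2], [−2, 0, 2], [2, −2, 0]], admits no reddening sequence (in particular, no maximal green sequence). -/
/-- Fomin–Zelevinsky matrix mutation at index `k`:
`b'_{ij} = -b_{ij}` if `i = k` or `j = k`, and
`b'_{ij} = b_{ij} + sgn(b_{ik}) * max 0 (b_{ik} * b_{kj})` otherwise. -/
def mmut {m : Type*} [DecidableEq m] (B : Matrix m m ℤ) (k : m) : Matrix m m ℤ :=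
  fun i j =>
    if i = k ∨ j = k then -B i j
    else B i j + Int.sign (B i k) * max 0 (B i k * B k j)

/-- The framed matrix `B̂ = [[B, I], [−I, 0]]`, indexed by `V ⊕ V`
(the first copy of `V` consists of the non-frozen vertices, the second one
of the frozen vertices). -/
def framed {V : Type*} [DecidableEq V] (B : Matrix V V ℤ) :
    Matrix (V ⊕ V) (V ⊕ V) ℤ :=
  Matrix.fromBlocks B 1 (-1) 0

/-- Mutation of a `(V ⊕ V)`-indexed matrix along a finite sequence of
non-frozen vertices. -/
def mutSeq {V : Type*} [DecidableEq V] (B : Matrix (V ⊕ V) (V ⊕ V) ℤ)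
    (l : List V) : Matrix (V ⊕ V) (V ⊕ V) ℤ :=
  l.foldl (fun M k => mmut M (Sum.inl k)) B

/-- A non-frozen vertex `i` is green in `R` if all entries of its `c`-vector
`j ↦ R (inl i) (inr j)` are `≥ 0`. -/
def IsGreenVertex {V : Type*} (R : Matrix (V ⊕ V) (V ⊕ V) ℤ) (i : V) : Prop :=
  ∀ j : V, 0 ≤ R (Sum.inl i) (Sum.inr j)

/-- A non-frozen vertex `i` is red in `R` if all entries of its `c`-vector
are `≤ 0`. -/
def IsRedVertex {V : Type*} (R : Matrix (V ⊕ V) (V ⊕ V) ℤ) (i : V) : Prop :=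
  ∀ j : V, R (Sum.inl i) (Sum.inr j) ≤ 0

/-- `(i_1, …, i_N)` is a green sequence for `B` if each `i_t` is green in
`μ_{i_{t-1}} ⋯ μ_{i_1}(B̂)`. -/
def IsGreenSeq {V : Type*} [DecidableEq V] (B : Matrix V V ℤ) (l : List V) : Prop :=
  ∀ (t : ℕ) (h : t < l.length),
    IsGreenVertex (mutSeq (framed B) (l.take t)) (l.get ⟨t, h⟩)

/-- `(i_1, …, i_N)` is reddening for `B` if every non-frozen vertex is red in
`μ_{i_N} ⋯ μ_{i_1}(B̂)`. -/
def IsReddeningSeq {V : Type*} [DecidableEq V] (B : Matrix V V ℤ) (l : List V) : Prop :=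
  ∀ i : V, IsRedVertex (mutSeq (framed B) l) i

/-- A maximal green sequence is a green sequence which is reddening. -/
def IsMaximalGreenSeq {V : Type*} [DecidableEq V] (B : Matrix V V ℤ) (l : List V) : Prop :=
  IsGreenSeq B l ∧ IsReddeningSeq B l


private def B0' : Matrix (Fin 3) (Fin 3) ℤ := !![0, 2, -2; -2, 0, 2; 2, -2, 0]

/-- The invariant: the principal part is `±B0'` and every column of the
`C`-matrix sums to `1`. -/
private def Q222Inv (M : Matrix (Fin 3 ⊕ Fin 3) (Fin 3 ⊕ Fin 3) ℤ) : Prop :=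
  ((∀ i j, M (Sum.inl i) (Sum.inl j) = B0' i j) ∨
   (∀ i j, M (Sum.inl i) (Sum.inl j) = -B0' i j)) ∧
  ∀ j, M (Sum.inl 0) (Sum.inr j) + M (Sum.inl 1) (Sum.inr j)
        + M (Sum.inl 2) (Sum.inr j) = 1

private lemma mmut_inl {M : Matrix (Fin 3 ⊕ Fin 3) (Fin 3 ⊕ Fin 3) ℤ}
    {X : Matrix (Fin 3) (Fin 3) ℤ}
    (hB : ∀ i j, M (Sum.inl i) (Sum.inl j) = X i j) (k i j : Fin 3) :
    mmut M (Sum.inl k) (Sum.inl i) (Sum.inl j) = mmut X k i j := by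
  simp only [mmut, Sum.inl.injEq, hB]

private lemma mmut_B0' : ∀ k, mmut B0' k = -B0' := by decide
private lemma mmut_negB0' : ∀ k, mmut (-B0') k = B0' := by decide

private lemma sign_two : Int.sign 2 = 1 := rfl
private lemma sign_negtwo : Int.sign (-2) = -1 := rfl

private lemma step (M : Matrix (Fin 3 ⊕ Fin 3) (Fin 3 ⊕ Fin 3) ℤ) (k : Fin 3)
    (h : Q222Inv M) : Q222Inv (mmut M (Sum.inl k)) := by
  obtain ⟨hB, hs⟩ := h
  constructor
  · rcases hB with hB | hB
    · right
      intro i j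
      rw [mmut_inl hB, mmut_B0', Matrix.neg_apply]
    · left
      intro i j
      rw [mmut_inl (X := -B0') (fun i j => by rw [hB, Matrix.neg_apply]), mmut_negB0']
  · intro j
    have hc : ∀ i : Fin 3, ((Sum.inl i : Fin 3 ⊕ Fin 3) = Sum.inl k ∨ (Sum.inr j : Fin 3 ⊕ Fin 3) = Sum.inl k)
        ↔ i = k := by simp
    simp only [mmut, hc]
    have h0 := hs j
    rcases hB with hB | hB <;>
    · have h00 := hB 0 k; have h10 := hB 1 k; have h20 := hB 2 k
      fin_cases k <;>
        simp only [show (⟨0, by norm_num⟩ : Fin 3) = 0 from rfl,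
          show (⟨1, by norm_num⟩ : Fin 3) = 1 from rfl,
          show (⟨2, by norm_num⟩ : Fin 3) = 2 from rfl] at * <;>
      · simp only [B0', Matrix.neg_apply] at h00 h10 h20
        norm_num at h00 h10 h20
        simp only [h00, h10, h20, if_true, sign_two, sign_negtwo, Fin.reduceEq,
          if_false, ite_false]
        simp only [Matrix.cons_val_two, Matrix.tail_cons, Matrix.head_cons, sign_two, sign_negtwo, one_mul] at *
        norm_num [sign_two]
        omega

private lemma inv_mutSeq : ∀ (l : List (Fin 3)) (M), Q222Inv M → Q222Inv (mutSeq M l)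
  | [], M, h => h
  | (k :: l), M, h => inv_mutSeq l _ (step M k h)

private lemma inv_framed : Q222Inv (framed B0') := by
  constructor
  · left; intro i j; rfl
  · intro j
    show (1 : Matrix (Fin 3) (Fin 3) ℤ) 0 j + (1 : Matrix (Fin 3) (Fin 3) ℤ) 1 j
        + (1 : Matrix (Fin 3) (Fin 3) ℤ) 2 j = 1
    fin_cases j <;> simp [Matrix.one_apply]

/-- Brüstle–Dupont–Pérotin: the quiver `Q_{2,2,2}` admits no
reddening sequence; in particular it admits no maximal green sequence. -/
theorem Q222_no_reddening :
    (¬ ∃ l, IsReddeningSeq (!![0, 2, -2; -2, 0, 2; 2, -2, 0] : Matrix (Fin 3) (Fin 3) ℤ) l) ∧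
    (¬ ∃ l, IsMaximalGreenSeq (!![0, 2, -2; -2, 0, 2; 2, -2, 0] : Matrix (Fin 3) (Fin 3) ℤ) l) := by
  have key : ¬ ∃ l, IsReddeningSeq (!![0, 2, -2; -2, 0, 2; 2, -2, 0] : Matrix (Fin 3) (Fin 3) ℤ) l := by
    rintro ⟨l, hl⟩
    have hinv := inv_mutSeq l (framed B0') inv_framed
    have h0 := hl 0 0
    have h1 := hl 1 0
    have h2 := hl 2 0
    have hs := hinv.2 0
    rw [show (!![0, 2, -2; -2, 0, 2; 2, -2, 0] : Matrix (Fin 3) (Fin 3) ℤ) = B0' from rfl]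
      at h0 h1 h2
    omega
  exact ⟨key, fun ⟨l, hg⟩ => key ⟨l, hg.2⟩⟩
end

section
/- (Brüstle–Dupont–Pérotin.) Let B be a skew-symmetric integer n×n matrix whose quiver is acyclic (the relation 'there is an arrow i → j', i.e. b_{ij} > 0, generates no oriented cycle). Then every source sequence for B is a maximal green sequence: that is, every enumeration (i_1,…,i_n) of all vertices {1,…,n} such that b_{i_s, i_t} > 0 implies s < t is a maximal green sequence for B. -/
/-- Target form of the mutated framed matrix: `ε i = -1` for already-mutated
vertices, `1` otherwise. -/
def tgt {n : ℕ} (B : Matrix (Fin n) (Fin n) ℤ) (ε : Fin n → ℤ) :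
    Matrix (Fin n ⊕ Fin n) (Fin n ⊕ Fin n) ℤ
  | Sum.inl i, Sum.inl j => ε i * ε j * B i j
  | Sum.inl i, Sum.inr j => if i = j then ε i else 0
  | Sum.inr i, Sum.inl j => if i = j then -ε j else 0
  | Sum.inr _, Sum.inr _ => 0

lemma sign_mul_max_eq_zero {a b : ℤ} (ha : a ≤ 0) (hb : 0 ≤ b) :
    Int.sign a * max 0 (a * b) = 0 := by
  rw [max_eq_left (mul_nonpos_of_nonpos_of_nonneg ha hb), mul_zero]

lemma tgt_step {n : ℕ} (B : Matrix (Fin n) (Fin n) ℤ)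
    (hB : ∀ i j, B j i = -B i j)
    (ε : Fin n → ℤ) (k : Fin n) (hεk : ε k = 1)
    (hk : ∀ i, ε i * B i k ≤ 0) :
    mmut (tgt B ε) (Sum.inl k) = tgt B (Function.update ε k (-1)) := by
  have hBkk : B k k = 0 := by have := hB k k; omega
  have hk2 : ∀ j, 0 ≤ ε j * B k j := by
    intro j
    have h1 := hk j
    have h2 : ε j * B k j = -(ε j * B j k) := by rw [hB j k]; ring
    omega
  funext p q
  rcases p with i | i <;> rcases q with j | j
  · -- inl, inl
    simp only [mmut, tgt, Function.update_apply, Sum.inl.injEq]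
    by_cases hik : i = k
    · by_cases hjk : j = k
      · rw [if_pos (Or.inl hik), if_pos hik, if_pos hjk, hik, hjk, hBkk]
        ring
      · rw [if_pos (Or.inl hik), if_pos hik, if_neg hjk, hik, hεk]
        ring
    · by_cases hjk : j = k
      · rw [if_pos (Or.inr hjk), if_neg hik, if_pos hjk, hjk, hεk]
        ring
      · rw [if_neg (by tauto), if_neg hik, if_neg hjk]
        have ha : ε i * ε k * B i k ≤ 0 := by rw [hεk, mul_one]; exact hk i
        have hb : 0 ≤ ε k * ε j * B k j := by rw [hεk, one_mul]; exact hk2 j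
        rw [sign_mul_max_eq_zero ha hb, add_zero]
  · -- inl, inr
    simp only [mmut, tgt, Function.update_apply, Sum.inl.injEq,
      reduceCtorEq, or_false]
    by_cases hik : i = k
    · rw [if_pos hik, if_pos hik]
      by_cases hij : i = j
      · rw [if_pos hij, if_pos hij, hik, hεk]
      · rw [if_neg hij, if_neg hij, neg_zero]
    · rw [if_neg hik, if_neg hik]
      have ha : ε i * ε k * B i k ≤ 0 := by rw [hεk, mul_one]; exact hk i
      have hb : (0 : ℤ) ≤ if k = j then ε k else 0 := by
        rw [hεk]; split <;> norm_num
      rw [sign_mul_max_eq_zero ha hb, add_zero]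
  · -- inr, inl
    simp only [mmut, tgt, Function.update_apply, Sum.inl.injEq,
      reduceCtorEq, false_or]
    by_cases hjk : j = k
    · rw [if_pos hjk, if_pos hjk]
      by_cases hij : i = j
      · rw [if_pos hij, if_pos hij, hjk, hεk]
      · rw [if_neg hij, if_neg hij, neg_zero]
    · rw [if_neg hjk, if_neg hjk]
      have ha : (if i = k then -ε k else 0) ≤ 0 := by
        rw [hεk]; split <;> norm_num
      have hb : 0 ≤ ε k * ε j * B k j := by rw [hεk, one_mul]; exact hk2 j
      rw [sign_mul_max_eq_zero ha hb, add_zero]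
  · -- inr, inr
    simp only [mmut, tgt, reduceCtorEq, or_self, if_false]
    have ha : (if i = k then -ε k else 0) ≤ 0 := by
      rw [hεk]; split <;> norm_num
    have hb : (0 : ℤ) ≤ if k = j then ε k else 0 := by
      rw [hεk]; split <;> norm_num
    rw [sign_mul_max_eq_zero ha hb, add_zero]

/-- Brüstle–Dupont–Pérotin: for an acyclic quiver, every source
sequence (an enumeration of all the vertices such that the existence of an
arrow `i_s → i_t` implies `s < t`) is a maximal green sequence. -/
theorem source_sequence_is_maximal_green (n : ℕ) (B : Matrix (Fin n) (Fin n) ℤ)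
    (hB : ∀ i j, B j i = -B i j)
    (hacyclic : ∀ i : Fin n, ¬ Relation.TransGen (fun i j : Fin n => 0 < B i j) i i)
    (l : List (Fin n)) (hnodup : l.Nodup) (hall : ∀ i : Fin n, i ∈ l)
    (hsource : ∀ (s t : ℕ) (hs : s < l.length) (ht : t < l.length),
        0 < B (l.get ⟨s, hs⟩) (l.get ⟨t, ht⟩) → s < t) :
    IsMaximalGreenSeq B l := by
  have key : ∀ t, t ≤ l.length → mutSeq (framed B) (l.take t)
      = tgt B (fun i => if i ∈ l.take t then -1 else 1) := by
    intro t
    induction t with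
    | zero =>
      intro _
      funext p q
      rcases p with i | i <;> rcases q with j | j <;>
        simp [mutSeq, framed, tgt, Matrix.one_apply] <;>
        split <;> simp
    | succ t ih =>
      intro ht
      have ht' : t < l.length := ht
      set k := l.get ⟨t, ht'⟩ with hkdef
      have htake : l.take (t + 1) = l.take t ++ [k] := by
        rw [← List.take_concat_get' l t ht']
        rfl
      have hmut : mutSeq (framed B) (l.take (t + 1))
          = mmut (mutSeq (framed B) (l.take t)) (Sum.inl k) := by
        rw [htake]
        simp [mutSeq, List.foldl_append]
      have hknot : k ∉ l.take t := by
        intro hmem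
        obtain ⟨s, hs, hsk⟩ := List.mem_take_iff_getElem.mp hmem
        have hst : s = t := hnodup.getElem_inj_iff.mp hsk
        omega
      have hk : ∀ i, (if i ∈ l.take t then (-1 : ℤ) else 1) * B i k ≤ 0 := by
        intro i
        by_cases hi : i ∈ l.take t
        · rw [if_pos hi, neg_one_mul, neg_nonpos]
          obtain ⟨s, hs, hsk⟩ := List.mem_take_iff_getElem.mp hi
          have hslen : s < l.length := by omega
          by_contra hcon
          push_neg at hcon
          have hBik : 0 < B k i := by have := hB i k; omega
          have : t < s := hsource t s ht' hslen (by
            show 0 < B (l.get ⟨t, ht'⟩) (l.get ⟨s, hslen⟩)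
            rw [show l.get ⟨s, hslen⟩ = i from hsk]
            exact hBik)
          omega
        · rw [if_neg hi, one_mul]
          by_contra hcon
          push_neg at hcon
          obtain ⟨s, hsk⟩ := List.mem_iff_get.mp (hall i)
          have hst : s.1 < t := hsource s.1 t s.2 ht' (by
            rw [show l.get s = i from hsk]
            exact hcon)
          apply hi
          rw [← hsk]
          exact List.mem_take_iff_getElem.mpr
            ⟨s.1, by omega, rfl⟩
      rw [hmut, ih ht'.le, tgt_step B hB _ k (if_neg hknot) hk]
      have hupd : Function.update
            (fun i => if i ∈ l.take t then (-1 : ℤ) else 1) k (-1)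
          = fun i => if i ∈ l.take (t + 1) then -1 else 1 := by
        funext i
        rw [Function.update_apply, htake]
        by_cases hik : i = k
        · simp [hik]
        · simp [hik, List.mem_append]
      rw [hupd]
  constructor
  · intro t ht
    rw [key t ht.le]
    intro j
    have hknot : l.get ⟨t, ht⟩ ∉ l.take t := by
      intro hmem
      obtain ⟨s, hs, hsk⟩ := List.mem_take_iff_getElem.mp hmem
      have hst : s = t := hnodup.getElem_inj_iff.mp hsk
      omega
    show (0 : ℤ) ≤ if l.get ⟨t, ht⟩ = j then
        (if l.get ⟨t, ht⟩ ∈ l.take t then -1 else 1) else 0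
    rw [if_neg hknot]
    split <;> norm_num
  · intro i j
    have hfull := key l.length le_rfl
    rw [List.take_length] at hfull
    rw [hfull]
    show (if i = j then (if i ∈ l then (-1 : ℤ) else 1) else 0) ≤ 0
    rw [if_pos (hall i)]
    split <;> norm_num
end

section
/- (Demonet–Iyama–Reading–Reiten–Thomas.) Let I be a two-sided ideal of A. Then: (i) for every torsion class T of mod A, the class T ∩ mod(A/I) is a torsion class of mod(A/I); (ii) the map T ↦ T ∩ mod(A/I) induces a contraction of Hasse quivers, i.e. whenever S ⋖ T is a covering relation in the poset of torsion classes of mod A ordered by inclusion (S ⊊ T and no torsion class of mod A lies strictly between them), either S ∩ mod(A/I) = T ∩ mod(A/I), or S ∩ mod(A/I) ⋖ T ∩ mod(A/I) is a covering relation in the poset of torsion classes of mod(A/I). -/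
universe u

/-- A bundled finite(-dimensional) module over a ring `R`.  When `R` is a
finite-dimensional algebra over a field, these are exactly the objects of
`mod R`. -/
structure FDMod (R : Type u) [Ring R] : Type (u + 1) where
  carrier : Type u
  [isAddCommGroup : AddCommGroup carrier]
  [isModule : Module R carrier]
  [isFinite : Module.Finite R carrier]

attribute [instance] FDMod.isAddCommGroup FDMod.isModule FDMod.isFinite

variable (R : Type u) [Ring R]

/-- A torsion class of the full subcategory of `mod R` determined by `P`:
a subclass of `P` containing the zero modules of `P` and closed under
isomorphisms, quotient modules (i.e. images of surjections) and extensions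
(within `P`). -/
structure IsTorsionClassIn (P T : Set (FDMod R)) : Prop where
  subset : T ⊆ P
  zero_mem : ∀ Z : FDMod R, Z ∈ P → (∀ z : Z.carrier, z = 0) → Z ∈ T
  iso_closed : ∀ M N : FDMod R, M ∈ T → N ∈ P →
    Nonempty (M.carrier ≃ₗ[R] N.carrier) → N ∈ T
  quot_closed : ∀ M N : FDMod R, M ∈ T → N ∈ P →
    (∃ f : M.carrier →ₗ[R] N.carrier, Function.Surjective f) → N ∈ T
  ext_closed : ∀ L M N : FDMod R, L ∈ T → N ∈ T → M ∈ P →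
    (∃ (f : L.carrier →ₗ[R] M.carrier) (g : M.carrier →ₗ[R] N.carrier),
       Function.Injective f ∧ Function.Surjective g ∧
       LinearMap.range f = LinearMap.ker g) → M ∈ T

/-- A torsion class of `mod R`. -/
def IsTorsionClass (T : Set (FDMod R)) : Prop :=
  IsTorsionClassIn R Set.univ T

/-- The smallest torsion class of `mod R` containing a given class `X` of
modules (the intersection of all torsion classes containing `X`). -/
def tclosure (X : Set (FDMod R)) : Set (FDMod R) :=
  {M | ∀ T : Set (FDMod R), IsTorsionClass R T → X ⊆ T → M ∈ T}

/-- A brick: a module whose endomorphism algebra is a division algebra. -/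
def IsBrick (M : FDMod R) : Prop :=
  Nontrivial M.carrier ∧ ∀ f : Module.End R M.carrier, f ≠ 0 → IsUnit f


/-- The class of modules of `mod A` annihilated by the two-sided ideal `I`,
identified with `mod (A/I)`. -/
def annClass (A : Type u) [Ring A] (I : TwoSidedIdeal A) : Set (FDMod Aᵐᵒᵖ) :=
  {M | ∀ a ∈ I, ∀ m : M.carrier, MulOpposite.op a • m = 0}

section Aux

variable {R : Type u} [Ring R]

lemma tclosure_isTorsionClass (X : Set (FDMod R)) : IsTorsionClass R (tclosure R X) := by
  constructor
  · exact Set.subset_univ _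
  · intro Z _ hz T hT hX; exact hT.zero_mem Z trivial hz
  · intro M N hM _ hiso T hT hX; exact hT.iso_closed M N (hM T hT hX) trivial hiso
  · intro M N hM _ hq T hT hX; exact hT.quot_closed M N (hM T hT hX) trivial hq
  · intro L M N hL hN _ hx T hT hX
    exact hT.ext_closed L M N (hL T hT hX) (hN T hT hX) trivial hx

lemma subset_tclosure (X : Set (FDMod R)) : X ⊆ tclosure R X :=
  fun _ hM T hT hX => hX hM

lemma tclosure_min {X T : Set (FDMod R)} (hT : IsTorsionClass R T) (h : X ⊆ T) :
    tclosure R X ⊆ T := fun _ hM => hM T hT h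

end Aux

section Lift

variable {A : Type u} [Ring A]

/-- The lift of a torsion class `U` of `mod (A/I)` to `mod A`: the modules all of
whose quotients annihilated by `I` lie in `U`. -/
def liftT (I : TwoSidedIdeal A) (U : Set (FDMod Aᵐᵒᵖ)) : Set (FDMod Aᵐᵒᵖ) :=
  {M | ∀ N : FDMod Aᵐᵒᵖ, N ∈ annClass A I →
    (∃ f : M.carrier →ₗ[Aᵐᵒᵖ] N.carrier, Function.Surjective f) → N ∈ U}

lemma liftT_isTorsionClass (I : TwoSidedIdeal A) (U : Set (FDMod Aᵐᵒᵖ))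
    (hU : IsTorsionClassIn Aᵐᵒᵖ (annClass A I) U) :
    IsTorsionClass Aᵐᵒᵖ (liftT I U) := by
  constructor
  · exact Set.subset_univ _
  · rintro Z - hz N hN ⟨f, hf⟩
    refine hU.zero_mem N hN (fun n => ?_)
    obtain ⟨z, rfl⟩ := hf n
    rw [hz z, map_zero]
  · rintro M N hM - ⟨e⟩ P hP ⟨f, hf⟩
    exact hM P hP ⟨f.comp (e : M.carrier →ₗ[Aᵐᵒᵖ] N.carrier),
      hf.comp e.surjective⟩
  · rintro M N hM - ⟨g, hg⟩ P hP ⟨f, hf⟩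
    exact hM P hP ⟨f.comp g, hf.comp hg⟩
  · rintro L M N hL hN - ⟨f, g, hfi, hgs, hfg⟩ P hP ⟨h, hh⟩
    classical
    set Q : Submodule Aᵐᵒᵖ P.carrier := LinearMap.range (h.comp f) with hQdef
    haveI : Module.Finite Aᵐᵒᵖ ↥Q :=
      Module.Finite.of_surjective (h.comp f).rangeRestrict
        (LinearMap.surjective_rangeRestrict _)
    haveI : Module.Finite Aᵐᵒᵖ (P.carrier ⧸ Q) :=
      Module.Finite.of_surjective Q.mkQ (Submodule.mkQ_surjective Q)
    let QM : FDMod Aᵐᵒᵖ := ⟨↥Q⟩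
    let PQ : FDMod Aᵐᵒᵖ := ⟨P.carrier ⧸ Q⟩
    have hQann : QM ∈ annClass A I := by
      intro a ha q
      apply Subtype.ext
      show MulOpposite.op a • (q : P.carrier) = 0
      exact hP a ha q.1
    have hQU : QM ∈ U :=
      hL QM hQann ⟨(h.comp f).rangeRestrict, LinearMap.surjective_rangeRestrict _⟩
    have hPQann : PQ ∈ annClass A I := by
      intro a ha m
      obtain ⟨p, rfl⟩ := Submodule.Quotient.mk_surjective Q m
      show MulOpposite.op a • Submodule.Quotient.mk p = (0 : P.carrier ⧸ Q)
      rw [← Submodule.Quotient.mk_smul, hP a ha p, Submodule.Quotient.mk_zero]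
    have hle : LinearMap.ker g ≤ LinearMap.ker (Q.mkQ.comp h) := by
      intro x hx
      rw [← hfg] at hx
      obtain ⟨l, rfl⟩ := hx
      show Q.mkQ (h (f l)) = 0
      rw [Submodule.mkQ_apply, Submodule.Quotient.mk_eq_zero]
      exact ⟨l, rfl⟩
    have hφs : Function.Surjective (Q.mkQ.comp h) := (Submodule.mkQ_surjective Q).comp hh
    have hlq : Function.Surjective ((LinearMap.ker g).liftQ (Q.mkQ.comp h) hle) := by
      intro y
      obtain ⟨m, hm⟩ := hφs y
      exact ⟨Submodule.Quotient.mk m, by rw [Submodule.liftQ_apply]; exact hm⟩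
    let e := g.quotKerEquivOfSurjective hgs
    have hPQU : PQ ∈ U :=
      hN PQ hPQann
        ⟨((LinearMap.ker g).liftQ (Q.mkQ.comp h) hle).comp
            (e.symm : N.carrier →ₗ[Aᵐᵒᵖ] M.carrier ⧸ LinearMap.ker g),
          hlq.comp e.symm.surjective⟩
    exact hU.ext_closed QM P PQ hQU hPQU hP
      ⟨Q.subtype, Q.mkQ, Submodule.injective_subtype Q, Submodule.mkQ_surjective Q,
        by rw [Submodule.range_subtype, Submodule.ker_mkQ]⟩

end Lift

/-- Demonet–Iyama–Reading–Reiten–Thomas: (i) for every torsion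
class `T` of `mod A`, the class `T ∩ mod (A/I)` is a torsion class of
`mod (A/I)`; (ii) the map `T ↦ T ∩ mod (A/I)` sends a covering relation
`S ⋖ T` of torsion classes of `mod A` either to an equality or to a covering
relation of torsion classes of `mod (A/I)` (a contraction of Hasse quivers). -/
theorem torsion_classes_contraction (K A : Type u) [Field K] [Ring A]
    [Algebra K A] [FiniteDimensional K A] (I : TwoSidedIdeal A) :
    (∀ T : Set (FDMod Aᵐᵒᵖ), IsTorsionClass Aᵐᵒᵖ T →
       IsTorsionClassIn Aᵐᵒᵖ (annClass A I) (T ∩ annClass A I)) ∧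
    (∀ S T : Set (FDMod Aᵐᵒᵖ), IsTorsionClass Aᵐᵒᵖ S → IsTorsionClass Aᵐᵒᵖ T →
       S ⊂ T → (∀ U : Set (FDMod Aᵐᵒᵖ), IsTorsionClass Aᵐᵒᵖ U → ¬ (S ⊂ U ∧ U ⊂ T)) →
       (S ∩ annClass A I = T ∩ annClass A I) ∨
       ((S ∩ annClass A I ⊂ T ∩ annClass A I) ∧
        ∀ U : Set (FDMod Aᵐᵒᵖ), IsTorsionClassIn Aᵐᵒᵖ (annClass A I) U →
          ¬ (S ∩ annClass A I ⊂ U ∧ U ⊂ T ∩ annClass A I))) := by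
  constructor
  · intro T hT
    constructor
    · exact Set.inter_subset_right
    · intro Z hZ hz; exact ⟨hT.zero_mem Z trivial hz, hZ⟩
    · intro M N hM hN hiso; exact ⟨hT.iso_closed M N hM.1 trivial hiso, hN⟩
    · intro M N hM hN hq; exact ⟨hT.quot_closed M N hM.1 trivial hq, hN⟩
    · intro L M N hL hN hM hx; exact ⟨hT.ext_closed L M N hL.1 hN.1 trivial hx, hM⟩
  · intro S T hS hT hST hcov
    by_cases heq : S ∩ annClass A I = T ∩ annClass A I
    · exact Or.inl heq
    right
    have hsub : S ∩ annClass A I ⊆ T ∩ annClass A I :=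
      Set.inter_subset_inter_left _ hST.subset
    refine ⟨HasSubset.Subset.ssubset_of_ne hsub heq, ?_⟩
    rintro U hU ⟨hSU, hUT⟩
    -- a module in `U` but not in `S ∩ ann`
    obtain ⟨M1, hM1U, hM1S⟩ := Set.exists_of_ssubset hSU
    -- the torsion class of `mod A` generated by `S ∪ U`
    set S' := tclosure Aᵐᵒᵖ (S ∪ U) with hS'def
    have hS'T : S' ⊆ T :=
      tclosure_min hT (Set.union_subset hST.subset
        (hUT.subset.trans Set.inter_subset_left))
    have hSS' : S ⊂ S' := by
      refine HasSubset.Subset.ssubset_of_ne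
        ((Set.subset_union_left).trans (subset_tclosure _)) ?_
      intro h
      apply hM1S
      rw [h]
      exact ⟨subset_tclosure _ (Or.inr hM1U), hU.subset hM1U⟩
    have hS'eqT : S' = T := by
      by_contra hne
      exact hcov S' (tclosure_isTorsionClass _)
        ⟨hSS', HasSubset.Subset.ssubset_of_ne hS'T hne⟩
    -- `S ∪ U` is contained in the lift of `U`
    have hSUW : S ∪ U ⊆ liftT I U := by
      rintro M (hM | hM) N hN hf
      · exact hSU.subset ⟨hS.quot_closed M N hM trivial hf, hN⟩
      · exact hU.quot_closed M N hM hN hf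
    have hTW : T ⊆ liftT I U := by
      rw [← hS'eqT]
      exact tclosure_min (liftT_isTorsionClass I U hU) hSUW
    -- a module in `T ∩ ann` but not in `U` gives a contradiction
    obtain ⟨M0, hM0T, hM0U⟩ := Set.exists_of_ssubset hUT
    exact hM0U (hTW hM0T.1 M0 hM0T.2 ⟨LinearMap.id, Function.surjective_id⟩)
end

section
/- Let S_•: I → mod A be an I-chain of bricks, and for each ideal j of I let T_j be the smallest torsion class of mod A containing {S_i : i ∈ j}. If j ⊆ j' are ideals of I and i ∈ j' ∖ j, then S_i ∈ T_{j'} and Hom_A(X, S_i) = 0 for every X ∈ T_j. Consequently the map j ↦ T_j from the poset of ideals of I to the poset of torsion classes of mod A is strictly increasing. -/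
universe u

variable (R : Type u) [Ring R]

/-- An ideal (downward closed subset) of a totally ordered set. -/
def IsIdealLO {I : Type*} [LinearOrder I] (j : Set I) : Prop :=
  ∀ ⦃a b : I⦄, a ≤ b → b ∈ j → a ∈ j

/-- The class of modules having no nonzero homomorphism to `N₀` is a torsion
class. -/
lemma isTorsionClass_homZero {R : Type u} [Ring R] (N₀ : FDMod R) :
    IsTorsionClass R {M : FDMod R | ∀ f : M.carrier →ₗ[R] N₀.carrier, f = 0} := by
  constructor
  · exact fun _ _ => Set.mem_univ _
  · intro Z _ hz f
    ext z
    rw [hz z, map_zero, LinearMap.zero_apply]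
  · rintro M N hM _ ⟨e⟩ f
    have h0 : f.comp (e : M.carrier →ₗ[R] N.carrier) = 0 := hM _
    ext n
    have := congrArg (fun g => g (e.symm n)) h0
    simpa using this
  · rintro M N hM _ ⟨p, hp⟩ f
    have h0 : f.comp p = 0 := hM _
    ext n
    obtain ⟨m, rfl⟩ := hp n
    have := congrArg (fun g => g m) h0
    simpa using this
  · rintro L M N hL hN _ ⟨f, g, _, hg, hrange⟩ φ
    have hle : LinearMap.ker g ≤ LinearMap.ker φ := by
      rw [← hrange]
      rintro x ⟨l, rfl⟩
      have h0 : φ.comp f = 0 := hL _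
      have := congrArg (fun ψ => ψ l) h0
      simpa using this
    have e := g.quotKerEquivOfSurjective hg
    set h : N.carrier →ₗ[R] N₀.carrier :=
      ((LinearMap.ker g).liftQ φ hle).comp (e.symm : N.carrier →ₗ[R] _) with hh
    have h0 : h = 0 := hN h
    ext m
    have hm : φ m = h (e (Submodule.Quotient.mk m)) := by
      rw [hh]
      simp
    rw [hm, h0]
    simp

/-- Everything in the torsion closure of a set of modules with no nonzero
hom to `N₀` has no nonzero hom to `N₀`. -/
lemma tclosure_homZero {R : Type u} [Ring R] (N₀ : FDMod R) (X : Set (FDMod R))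
    (hX : ∀ M ∈ X, ∀ f : M.carrier →ₗ[R] N₀.carrier, f = 0) :
    ∀ M ∈ tclosure R X, ∀ f : M.carrier →ₗ[R] N₀.carrier, f = 0 :=
  fun M hM => hM _ (isTorsionClass_homZero N₀) hX


/-- let `S : I → mod A` be an `I`-chain of bricks and, for an
ideal `j` of `I`, let `T j` be the smallest torsion class containing the
`S i`, `i ∈ j`.  If `j ⊆ j'` are ideals and `i ∈ j' \ j`, then
`S i ∈ T j'` and `Hom(X, S i) = 0` for all `X ∈ T j`.  Consequently
`j ↦ T j` is strictly increasing. -/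
theorem chain_of_bricks_torsion_classes (K A : Type u) [Field K] [Ring A]
    [Algebra K A] [FiniteDimensional K A]
    (I : Type*) [LinearOrder I] (S : I → FDMod Aᵐᵒᵖ)
    (hbrick : ∀ i, IsBrick Aᵐᵒᵖ (S i))
    (hhom : ∀ i i' : I, i < i' →
        ∀ f : (S i).carrier →ₗ[Aᵐᵒᵖ] (S i').carrier, f = 0)
    (j j' : Set I) (hj : IsIdealLO j) (hj' : IsIdealLO j') (hjj' : j ⊆ j')
    (i : I) (hij' : i ∈ j') (hij : i ∉ j) :
    (S i ∈ tclosure Aᵐᵒᵖ (S '' j')) ∧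
    (∀ X ∈ tclosure Aᵐᵒᵖ (S '' j),
        ∀ f : X.carrier →ₗ[Aᵐᵒᵖ] (S i).carrier, f = 0) ∧
    (∀ j₁ j₂ : Set I, IsIdealLO j₁ → IsIdealLO j₂ → j₁ ⊂ j₂ →
        tclosure Aᵐᵒᵖ (S '' j₁) ⊂ tclosure Aᵐᵒᵖ (S '' j₂)) := by
  -- the key Hom-vanishing lemma, for any ideal `j₀` and any `i₀ ∉ j₀`
  have key : ∀ (j₀ : Set I), IsIdealLO j₀ → ∀ i₀ : I, i₀ ∉ j₀ →
      ∀ X ∈ tclosure Aᵐᵒᵖ (S '' j₀),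
        ∀ f : X.carrier →ₗ[Aᵐᵒᵖ] (S i₀).carrier, f = 0 := by
    intro j₀ hj₀ i₀ hi₀
    refine tclosure_homZero (S i₀) (S '' j₀) ?_
    rintro M ⟨i'', hi'', rfl⟩ f
    have hlt : i'' < i₀ := by
      by_contra h
      exact hi₀ (hj₀ (not_lt.mp h) hi'')
    exact hhom i'' i₀ hlt f
  -- membership of generators in the closure
  have memgen : ∀ (j₀ : Set I) (i₀ : I), i₀ ∈ j₀ →
      S i₀ ∈ tclosure Aᵐᵒᵖ (S '' j₀) :=
    fun j₀ i₀ h T _ hsub => hsub ⟨i₀, h, rfl⟩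
  refine ⟨memgen j' i hij', key j hj i hij, ?_⟩
  intro j₁ j₂ hj₁ hj₂ hsub
  have hle := hsub.1
  obtain ⟨i₀, hi₂, hi₁⟩ := Set.ssubset_iff_of_subset hsub.1 |>.mp hsub
  constructor
  · intro M hM T hT hTsub
    exact hM T hT fun N hN => hTsub (Set.image_mono hle hN)
  · intro hcon
    have hmem : S i₀ ∈ tclosure Aᵐᵒᵖ (S '' j₁) := hcon (memgen j₂ i₀ hi₂)
    have hid := key j₁ hj₁ i₀ hi₁ (S i₀) hmem LinearMap.id
    have : Nontrivial (S i₀).carrier := (hbrick i₀).1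
    obtain ⟨x, hx⟩ := exists_ne (0 : (S i₀).carrier)
    exact hx (by simpa using congrArg (fun g => g x) hid)
end
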